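/- Let $V, W$ be matrix regular operator spaces and suppose $V \otimes_\alpha W$ is a matrix regular operator space structure on $V \otimes W$ such that $\|\cdot\|_\alpha$ is a subcross matrix norm and $v \otimes w \in M_{kl}(V \otimes_\alpha W)^+$ whenever $v \in M_k(V)^+$ and $w \in M_l(W)^+$. Then $M_n(V \otimes_\Delta W)^+ \subseteq M_n(V \otimes_\alpha W)^+$ and $\|z\|_\alpha \le \|z\|_\Delta$ for all $z \in M_n(V \otimes W)$. -/

import Mathlib

open scoped TensorProduct ComplexConjugate ComplexOrder
open Matrix

noncomputable section

/-- Operator norm of a rectangular complex matrix (as an operator between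
Euclidean spaces). -/
def opN {m n : Type} [Fintype m] [Fintype n] [DecidableEq m] [DecidableEq n]
    (α : Matrix m n ℂ) : ℝ :=
  ‖LinearMap.toContinuousLinearMap (Matrix.toEuclideanLin α)‖

section ops

variable {V W : Type} [AddCommGroup V] [Module ℂ V]

/-- Left action of a scalar matrix on a `V`-valued matrix. -/
def mulL {ι κ κ' : Type} [Fintype κ] (α : Matrix ι κ ℂ) (v : Matrix κ κ' V) :
    Matrix ι κ' V := Matrix.of fun i j => ∑ p, α i p • v p j

/-- Right action of a scalar matrix on a `V`-valued matrix. -/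
def mulR {ι κ κ' : Type} [Fintype κ] (v : Matrix ι κ V) (β : Matrix κ κ' ℂ) :
    Matrix ι κ' V := Matrix.of fun i j => ∑ p, β p j • v i p

/-- `trip α v β = α * v * β`. -/
def trip {ι κ κ' ι' : Type} [Fintype κ] [Fintype κ'] (α : Matrix ι κ ℂ)
    (v : Matrix κ κ' V) (β : Matrix κ' ι' ℂ) : Matrix ι ι' V :=
  mulR (mulL α v) β

/-- Entrywise application of a linear map to a matrix. -/
def mapMat {ι ι' : Type} [AddCommGroup W] [Module ℂ W] (T : V →ₗ[ℂ] W)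
    (z : Matrix ι ι' V) : Matrix ι ι' W := Matrix.of fun i j => T (z i j)

/-- Amplification of a map into a matrix algebra. -/
def ampS {κ ι : Type} (T : V →ₗ[ℂ] Matrix κ κ ℂ) (z : Matrix ι ι V) :
    Matrix (ι × κ) (ι × κ) ℂ := Matrix.of fun a b => T (z a.1 b.1) a.2 b.2

end ops

/-- A matrix regular operator space: an operator space which is matrix ordered
with closed proper-compatible cones, satisfying Ruan's axioms and the two
regularity conditions.  Matrix levels are indexed by arbitrary finite index
types. -/
structure MROS (V : Type) [AddCommGroup V] [Module ℂ V] [StarAddMonoid V]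
    [StarModule ℂ V] where
  N : ∀ (ι : Type) [Fintype ι] [DecidableEq ι], Matrix ι ι V → ℝ
  pos : ∀ (ι : Type) [Fintype ι] [DecidableEq ι], Set (Matrix ι ι V)
  N_zero : ∀ (ι : Type) [Fintype ι] [DecidableEq ι] (v : Matrix ι ι V),
    N ι v = 0 ↔ v = 0
  N_add : ∀ (ι : Type) [Fintype ι] [DecidableEq ι] (v w : Matrix ι ι V),
    N ι (v + w) ≤ N ι v + N ι w
  N_smul : ∀ (ι : Type) [Fintype ι] [DecidableEq ι] (c : ℂ) (v : Matrix ι ι V),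
    N ι (c • v) = ‖c‖ * N ι v
  N_star : ∀ (ι : Type) [Fintype ι] [DecidableEq ι] (v : Matrix ι ι V),
    N ι vᴴ = N ι v
  ruan1 : ∀ (ι κ : Type) [Fintype ι] [DecidableEq ι] [Fintype κ] [DecidableEq κ]
    (α : Matrix ι κ ℂ) (v : Matrix κ κ V) (β : Matrix κ ι ℂ),
    N ι (trip α v β) ≤ opN α * N κ v * opN β
  ruan2 : ∀ (ι κ : Type) [Fintype ι] [DecidableEq ι] [Fintype κ] [DecidableEq κ]
    (v : Matrix ι ι V) (w : Matrix κ κ V),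
    N (ι ⊕ κ) (Matrix.fromBlocks v 0 0 w) = max (N ι v) (N κ w)
  pos_sa : ∀ (ι : Type) [Fintype ι] [DecidableEq ι] (v : Matrix ι ι V),
    v ∈ pos ι → vᴴ = v
  pos_add : ∀ (ι : Type) [Fintype ι] [DecidableEq ι] (v w : Matrix ι ι V),
    v ∈ pos ι → w ∈ pos ι → v + w ∈ pos ι
  pos_smul : ∀ (ι : Type) [Fintype ι] [DecidableEq ι] (c : ℝ) (v : Matrix ι ι V),
    0 ≤ c → v ∈ pos ι → (c : ℂ) • v ∈ pos ι
  pos_compress : ∀ (ι κ : Type) [Fintype ι] [DecidableEq ι] [Fintype κ]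
    [DecidableEq κ] (α : Matrix ι κ ℂ) (v : Matrix κ κ V),
    v ∈ pos κ → trip α v αᴴ ∈ pos ι
  pos_closed : ∀ (ι : Type) [Fintype ι] [DecidableEq ι] (z : Matrix ι ι V),
    (∀ ε : ℝ, 0 < ε → ∃ u ∈ pos ι, N ι (z - u) < ε) → z ∈ pos ι
  reg1 : ∀ (ι : Type) [Fintype ι] [DecidableEq ι] (v u : Matrix ι ι V),
    vᴴ = v → u ∈ pos ι → u - v ∈ pos ι → u + v ∈ pos ι → N ι v ≤ N ι u
  reg2 : ∀ (ι : Type) [Fintype ι] [DecidableEq ι] (v : Matrix ι ι V),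
    vᴴ = v → N ι v < 1 →
    ∃ u ∈ pos ι, N ι u < 1 ∧ u - v ∈ pos ι ∧ u + v ∈ pos ι

section maps

variable {V W : Type} [AddCommGroup V] [Module ℂ V] [StarAddMonoid V]
  [StarModule ℂ V] [AddCommGroup W] [Module ℂ W] [StarAddMonoid W]
  [StarModule ℂ W]

/-- The norm of a single element, via the first matrix level. -/
def nrm1 (MV : MROS V) (v : V) : ℝ := MV.N PUnit (Matrix.of fun _ _ => v)

/-- A map into a matrix algebra is completely positive. -/
def IsCPs (MV : MROS V) {κ : Type} [Fintype κ] [DecidableEq κ]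
    (φ : V →ₗ[ℂ] Matrix κ κ ℂ) : Prop :=
  ∀ (ι : Type) [Fintype ι] [DecidableEq ι], ∀ z ∈ MV.pos ι, (ampS φ z).PosSemidef

/-- A map into a matrix algebra is completely bounded (in particular
continuous). -/
def IsCBs (MV : MROS V) {κ : Type} [Fintype κ] [DecidableEq κ]
    (φ : V →ₗ[ℂ] Matrix κ κ ℂ) : Prop :=
  ∃ C : ℝ, ∀ (ι : Type) [Fintype ι] [DecidableEq ι] (z : Matrix ι ι V),
    opN (ampS φ z) ≤ C * MV.N ι z

/-- A map into a matrix algebra is completely contractive. -/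
def IsCCs (MV : MROS V) {κ : Type} [Fintype κ] [DecidableEq κ]
    (φ : V →ₗ[ℂ] Matrix κ κ ℂ) : Prop :=
  ∀ (ι : Type) [Fintype ι] [DecidableEq ι] (z : Matrix ι ι V),
    opN (ampS φ z) ≤ MV.N ι z

/-- A linear map between matrix regular operator spaces is completely
positive. -/
def IsCPm (MV : MROS V) (MW : MROS W) (T : V →ₗ[ℂ] W) : Prop :=
  ∀ (ι : Type) [Fintype ι] [DecidableEq ι], ∀ z ∈ MV.pos ι, mapMat T z ∈ MW.pos ι

/-- Completely bounded norm with respect to given matrix norm data. -/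
def cbWith (N1 : ∀ (ι : Type) [Fintype ι] [DecidableEq ι], Matrix ι ι V → ℝ)
    (N2 : ∀ (ι : Type) [Fintype ι] [DecidableEq ι], Matrix ι ι W → ℝ)
    (T : V →ₗ[ℂ] W) : ℝ :=
  sInf { C : ℝ | 0 ≤ C ∧ ∀ (ι : Type) [Fintype ι] [DecidableEq ι]
    (z : Matrix ι ι V), N2 ι (mapMat T z) ≤ C * N1 ι z }

/-- The completely bounded norm of a map between matrix regular operator
spaces. -/
def cbN (MV : MROS V) (MW : MROS W) (T : V →ₗ[ℂ] W) : ℝ := cbWith MV.N MW.N T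

/-- The adjoint map `T^*(v) = (T(v^*))^*`. -/
def adjMap (T : V →ₗ[ℂ] W) : V →ₗ[ℂ] W where
  toFun v := star (T (star v))
  map_add' v w := by simp [star_add, map_add]
  map_smul' c v := by simp [star_smul, _root_.map_smul]

/-- `T` is decomposable, witnessed by completely positive maps `S1`, `S2`,
relative to given cone data on domain and codomain. -/
def IsDecompW
    (P1 : ∀ (ι : Type) [Fintype ι] [DecidableEq ι], Set (Matrix ι ι V))
    (P2 : ∀ (ι : Type) [Fintype ι] [DecidableEq ι], Set (Matrix ι ι W))
    (T S1 S2 : V →ₗ[ℂ] W) : Prop :=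
  ∀ (ι : Type) [Fintype ι] [DecidableEq ι], ∀ v ∈ P1 ι,
    Matrix.fromBlocks (mapMat S1 v) (mapMat T v) (mapMat (adjMap T) v)
      (mapMat S2 v) ∈ P2 (ι ⊕ ι)

/-- `T` is decomposable. -/
def Decomp (MV : MROS V) (MW : MROS W) (T : V →ₗ[ℂ] W) : Prop :=
  ∃ S1 S2 : V →ₗ[ℂ] W, IsDecompW MV.pos MW.pos T S1 S2

/-- Operator norm (at the first level) of a linear map, with respect to given
level-one norms. -/
def op1With (n1 : V → ℝ) (n2 : W → ℝ) (T : V →ₗ[ℂ] W) : ℝ :=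
  sInf { C : ℝ | 0 ≤ C ∧ ∀ v : V, n2 (T v) ≤ C * n1 v }

/-- Decomposable norm with respect to given cone and norm data. -/
def decWith
    (P1 : ∀ (ι : Type) [Fintype ι] [DecidableEq ι], Set (Matrix ι ι V))
    (P2 : ∀ (ι : Type) [Fintype ι] [DecidableEq ι], Set (Matrix ι ι W))
    (n1 : V → ℝ) (n2 : W → ℝ) (T : V →ₗ[ℂ] W) : ℝ :=
  sInf { c : ℝ | ∃ S1 S2 : V →ₗ[ℂ] W, IsDecompW P1 P2 T S1 S2 ∧
    op1With n1 n2 S1 ≤ c ∧ op1With n1 n2 S2 ≤ c }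

/-- The decomposable norm of a map between matrix regular operator spaces. -/
def decN (MV : MROS V) (MW : MROS W) (T : V →ₗ[ℂ] W) : ℝ :=
  decWith MV.pos MW.pos (nrm1 MV) (nrm1 MW) T

end maps

section tensor

variable {V W : Type} [AddCommGroup V] [Module ℂ V] [StarAddMonoid V]
  [StarModule ℂ V] [AddCommGroup W] [Module ℂ W] [StarAddMonoid W]
  [StarModule ℂ W]

/-- The Kronecker product of a `V`-valued and a `W`-valued matrix, with values
in `V ⊗ W`. -/
def kron {ι κ : Type} (v : Matrix ι ι V) (w : Matrix κ κ W) :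
    Matrix (ι × κ) (ι × κ) (V ⊗[ℂ] W) :=
  Matrix.of fun a b => v a.1 b.1 ⊗ₜ[ℂ] w a.2 b.2

/-- The tensor product `φ ⊗ ψ : V ⊗ W → M_{k×l}` of two matrix-algebra valued
maps. -/
def pairMap {k l : Type} (φ : V →ₗ[ℂ] Matrix k k ℂ)
    (ψ : W →ₗ[ℂ] Matrix l l ℂ) :
    (V ⊗[ℂ] W) →ₗ[ℂ] Matrix (k × l) (k × l) ℂ :=
  TensorProduct.lift (LinearMap.mk₂ ℂ
    (fun v w => Matrix.of fun a b => φ v a.1 b.1 * ψ w a.2 b.2)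
    (fun v v' w => by
      ext a b
      simp [map_add, Matrix.add_apply, add_mul])
    (fun c v w => by
      ext a b
      simp [_root_.map_smul, Matrix.smul_apply, smul_eq_mul]
      ring)
    (fun v w w' => by
      ext a b
      simp [map_add, Matrix.add_apply, mul_add])
    (fun c v w => by
      ext a b
      simp [_root_.map_smul, Matrix.smul_apply, smul_eq_mul]
      ring))

variable (MV : MROS V) (MW : MROS W)

/-- The cone `M_ι(V ⊗_Δ W)_+` of elements `α (v ⊗ w) α^*` with `v, w`
positive. -/
def DeltaPos (ι : Type) [Fintype ι] [DecidableEq ι] :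
    Set (Matrix ι ι (V ⊗[ℂ] W)) :=
  { z | ∃ (k l : ℕ) (v : Matrix (Fin k) (Fin k) V)
      (w : Matrix (Fin l) (Fin l) W) (α : Matrix ι (Fin k × Fin l) ℂ),
      v ∈ MV.pos (Fin k) ∧ w ∈ MW.pos (Fin l) ∧ z = trip α (kron v w) αᴴ }

/-- `|z|_Δ` for `z ∈ M_ι(V ⊗_Δ W)_+`. -/
def DeltaAbs (ι : Type) [Fintype ι] [DecidableEq ι]
    (z : Matrix ι ι (V ⊗[ℂ] W)) : ℝ :=
  sInf { r : ℝ | ∃ (k l : ℕ) (v : Matrix (Fin k) (Fin k) V)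
    (w : Matrix (Fin l) (Fin l) W) (α : Matrix ι (Fin k × Fin l) ℂ),
    v ∈ MV.pos (Fin k) ∧ w ∈ MW.pos (Fin l) ∧ z = trip α (kron v w) αᴴ ∧
    r = opN α ^ 2 * MV.N (Fin k) v * MW.N (Fin l) w }

/-- The norm `‖z‖_Δ`. -/
def DeltaN [Star (V ⊗[ℂ] W)] (ι : Type) [Fintype ι] [DecidableEq ι]
    (z : Matrix ι ι (V ⊗[ℂ] W)) : ℝ :=
  sInf { r : ℝ | ∃ u u' : Matrix ι ι (V ⊗[ℂ] W),
    Matrix.fromBlocks u z zᴴ u' ∈ DeltaPos MV MW (ι ⊕ ι) ∧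
    r = max (DeltaAbs MV MW ι u) (DeltaAbs MV MW ι u') }

/-- The closed cone `M_ι(V ⊗_Δ W)^+` (closure of `M_ι(V ⊗_Δ W)_+` in
`‖·‖_Δ`). -/
def DeltaPosC [Star (V ⊗[ℂ] W)] (ι : Type) [Fintype ι] [DecidableEq ι] :
    Set (Matrix ι ι (V ⊗[ℂ] W)) :=
  { z | ∀ ε : ℝ, 0 < ε → ∃ u ∈ DeltaPos MV MW ι, DeltaN MV MW ι (z - u) < ε }

/-- The cone `M_ι(V ⊗_δ W)_+`: elements whose pairings with all continuous
completely positive maps into matrix algebras are positive semidefinite. -/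
def deltaPos (ι : Type) [Fintype ι] [DecidableEq ι] :
    Set (Matrix ι ι (V ⊗[ℂ] W)) :=
  { z | ∀ (k l : ℕ) (φ : V →ₗ[ℂ] Matrix (Fin k) (Fin k) ℂ)
      (ψ : W →ₗ[ℂ] Matrix (Fin l) (Fin l) ℂ),
      IsCPs MV φ → IsCBs MV φ → IsCPs MW ψ → IsCBs MW ψ →
      (ampS (pairMap φ ψ) z).PosSemidef }

/-- `|z|_δ` for `z ∈ M_ι(V ⊗_δ W)_+`. -/
def deltaAbs (ι : Type) [Fintype ι] [DecidableEq ι]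
    (z : Matrix ι ι (V ⊗[ℂ] W)) : ℝ :=
  sSup { r : ℝ | ∃ (k l : ℕ) (φ : V →ₗ[ℂ] Matrix (Fin k) (Fin k) ℂ)
    (ψ : W →ₗ[ℂ] Matrix (Fin l) (Fin l) ℂ),
    IsCPs MV φ ∧ IsCCs MV φ ∧ IsCPs MW ψ ∧ IsCCs MW ψ ∧
    r = opN (ampS (pairMap φ ψ) z) }

/-- The norm `‖z‖_δ`. -/
def deltaN [Star (V ⊗[ℂ] W)] (ι : Type) [Fintype ι] [DecidableEq ι]
    (z : Matrix ι ι (V ⊗[ℂ] W)) : ℝ :=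
  sInf { r : ℝ | ∃ u u' : Matrix ι ι (V ⊗[ℂ] W),
    Matrix.fromBlocks u z zᴴ u' ∈ deltaPos MV MW (ι ⊕ ι) ∧
    r = max (deltaAbs MV MW ι u) (deltaAbs MV MW ι u') }

/-- The closed cone `M_ι(V ⊗_δ W)^+`. -/
def deltaPosC [Star (V ⊗[ℂ] W)] (ι : Type) [Fintype ι] [DecidableEq ι] :
    Set (Matrix ι ι (V ⊗[ℂ] W)) :=
  { z | ∀ ε : ℝ, 0 < ε → ∃ u ∈ deltaPos MV MW ι, deltaN MV MW ι (z - u) < ε }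

/-- The injective operator space tensor norm `‖z‖_∨`: the supremum of pairings
with all pairs of complete contractions into matrix algebras. -/
def veeN (ι : Type) [Fintype ι] [DecidableEq ι]
    (z : Matrix ι ι (V ⊗[ℂ] W)) : ℝ :=
  sSup { r : ℝ | ∃ (k l : ℕ) (φ : V →ₗ[ℂ] Matrix (Fin k) (Fin k) ℂ)
    (ψ : W →ₗ[ℂ] Matrix (Fin l) (Fin l) ℂ),
    IsCCs MV φ ∧ IsCCs MW ψ ∧ r = opN (ampS (pairMap φ ψ) z) }

end tensor

section dual

variable {V : Type} [AddCommGroup V] [Module ℂ V] [StarAddMonoid V]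
  [StarModule ℂ V]

/-- The dual matrix cone on `M_ι(V^*)` : matrices of functionals which pair
positively with all positive matrices over `V`. -/
def dualPos (MV : MROS V) (ι : Type) [Fintype ι] [DecidableEq ι]
    (F : Matrix ι ι (V →ₗ[ℂ] ℂ)) : Prop :=
  ∀ (k : ℕ) (v : Matrix (Fin k) (Fin k) V), v ∈ MV.pos (Fin k) →
    (Matrix.of fun (a b : Fin k × ι) => F a.2 b.2 (v a.1 b.1)).PosSemidef

/-- The dual matrix norm on `M_ι(V^*)`. -/
def dualN (MV : MROS V) (ι : Type) [Fintype ι] [DecidableEq ι]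
    (F : Matrix ι ι (V →ₗ[ℂ] ℂ)) : ℝ :=
  sSup { r : ℝ | ∃ (k : ℕ) (v : Matrix (Fin k) (Fin k) V),
    MV.N (Fin k) v ≤ 1 ∧
    r = opN (Matrix.of fun (a b : Fin k × ι) => F a.2 b.2 (v a.1 b.1)) }

end dual

attribute [-instance] TensorProduct.instStar TensorProduct.instInvolutiveStar
  TensorProduct.instStarAddMonoid TensorProduct.instStarModule

section aux1

variable {X : Type} [AddCommGroup X] [Module ℂ X]

lemma trip_apply {ι κ κ' ι' : Type} [Fintype κ] [Fintype κ'] (α : Matrix ι κ ℂ)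
    (v : Matrix κ κ' X) (β : Matrix κ' ι' ℂ) (i : ι) (j : ι') :
    trip α v β i j = ∑ p, ∑ q, (α i p * β q j) • v p q := by
  simp only [trip, mulR, mulL, Matrix.of_apply, Finset.smul_sum]
  rw [Finset.sum_comm]
  refine Finset.sum_congr rfl fun p _ => Finset.sum_congr rfl fun q _ => ?_
  rw [smul_smul, mul_comm]

lemma trip_diagonal {ι : Type} [Fintype ι] [DecidableEq ι] (d : ι → ℂ)
    (v : Matrix ι ι X) (a b : ι) :
    trip (Matrix.diagonal d) v (Matrix.diagonal d)ᴴ a b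
      = (d a * star (d b)) • v a b := by
  rw [trip_apply]
  simp [Matrix.diagonal, Matrix.conjTranspose_apply, apply_ite, ite_mul, mul_ite,
    ite_smul, Finset.sum_ite_eq, Finset.sum_ite_eq']

/-- Selection matrix for a map of index types. -/
def sel {ι κ : Type} (f : ι → κ) [DecidableEq κ] : Matrix ι κ ℂ :=
  Matrix.of fun i a => if a = f i then 1 else 0

lemma opN_nonneg {m n : Type} [Fintype m] [Fintype n] [DecidableEq m] [DecidableEq n]
    (α : Matrix m n ℂ) : 0 ≤ opN α := norm_nonneg _

lemma opN_conjTranspose {m n : Type} [Fintype m] [Fintype n] [DecidableEq m] [DecidableEq n]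
    (α : Matrix m n ℂ) : opN αᴴ = opN α := by
  unfold opN
  rw [Matrix.toEuclideanLin_conjTranspose_eq_adjoint, LinearMap.adjoint_toContinuousLinearMap]
  exact ContinuousLinearMap.adjoint.norm_map _

lemma opN_sel {ι κ : Type} [Fintype ι] [Fintype κ] [DecidableEq ι] [DecidableEq κ]
    (f : ι → κ) (hf : Function.Injective f) : opN (sel f) ≤ 1 := by
  apply ContinuousLinearMap.opNorm_le_bound _ zero_le_one
  intro x
  rw [one_mul]
  have hx : ∀ i, (LinearMap.toContinuousLinearMap
      (Matrix.toEuclideanLin (sel f)) x) i = x (f i) := by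
    intro i
    simp [sel, Matrix.toEuclideanLin_apply, Matrix.mulVec, dotProduct]
  rw [EuclideanSpace.norm_eq, EuclideanSpace.norm_eq]
  apply Real.sqrt_le_sqrt
  simp only [hx]
  calc ∑ i, ‖x (f i)‖^2 = ∑ a ∈ Finset.univ.image f, ‖x a‖^2 := by
        rw [Finset.sum_image (fun a _ b _ h => hf h)]
    _ ≤ ∑ a, ‖x a‖^2 := Finset.sum_le_sum_of_subset_of_nonneg (Finset.subset_univ _)
        (fun a _ _ => by positivity)

end aux1

section aux2

variable {X : Type} [AddCommGroup X] [Module ℂ X] [StarAddMonoid X]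
  [StarModule ℂ X] (M : MROS X)

lemma MROS.N_nonneg (ι : Type) [Fintype ι] [DecidableEq ι] (v : Matrix ι ι X) :
    0 ≤ M.N ι v := by
  have h0 : M.N ι 0 = 0 := (M.N_zero ι 0).mpr rfl
  have hadd := M.N_add ι v (-v)
  have hneg : M.N ι (-v) = M.N ι v := by
    have := M.N_smul ι (-1) v
    simpa using this
  rw [add_neg_cancel, h0, hneg] at hadd
  linarith

lemma MROS.pos_zero (ι : Type) [Fintype ι] [DecidableEq ι] :
    (0 : Matrix ι ι X) ∈ M.pos ι := by
  obtain ⟨u, hu, -, -, -⟩ := M.reg2 ι 0 (by simp)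
    (by rw [(M.N_zero ι 0).mpr rfl]; norm_num)
  have := M.pos_smul ι 0 u le_rfl hu
  simpa using this

lemma norm_offdiag_le (ι : Type) [Fintype ι] [DecidableEq ι]
    (u z u' : Matrix ι ι X)
    (h : Matrix.fromBlocks u z zᴴ u' ∈ M.pos (ι ⊕ ι)) :
    M.N ι z ≤ max (M.N ι u) (M.N ι u') := by
  classical
  set d : ι ⊕ ι → ℂ := Sum.elim (fun _ => 1) (fun _ => -1) with hd
  have hDP : trip (Matrix.diagonal d) (Matrix.fromBlocks u z zᴴ u')
      (Matrix.diagonal d)ᴴ = Matrix.fromBlocks u (-z) (-zᴴ) u' := by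
    ext a b
    rw [trip_diagonal]
    rcases a with a | a <;> rcases b with b | b <;>
      simp [hd, Matrix.fromBlocks]
  have hQ : Matrix.fromBlocks u (-z) (-zᴴ) u' ∈ M.pos (ι ⊕ ι) := by
    rw [← hDP]; exact M.pos_compress _ _ (Matrix.diagonal d) _ h
  have hsum : Matrix.fromBlocks u z zᴴ u' + Matrix.fromBlocks u (-z) (-zᴴ) u'
      = (2:ℂ) • Matrix.fromBlocks u 0 0 u' := by
    ext a b
    rcases a with a | a <;> rcases b with b | b <;>
      simp [Matrix.fromBlocks, two_smul]
  have hU : Matrix.fromBlocks u 0 0 u' ∈ M.pos (ι ⊕ ι) := by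
    have h1 := M.pos_add _ _ _ h hQ
    have h2 := M.pos_smul _ ((1:ℝ)/2) _ (by norm_num) h1
    have e : ((((1:ℝ)/2 : ℝ)):ℂ) • (Matrix.fromBlocks u z zᴴ u'
        + Matrix.fromBlocks u (-z) (-zᴴ) u') = Matrix.fromBlocks u 0 0 u' := by
      rw [hsum, smul_smul]
      norm_num
    rwa [e] at h2
  have hUB1 : Matrix.fromBlocks u 0 0 u' - Matrix.fromBlocks 0 z zᴴ 0
      = Matrix.fromBlocks u (-z) (-zᴴ) u' := by
    ext a b
    rcases a with a | a <;> rcases b with b | b <;> simp [Matrix.fromBlocks]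
  have hUB2 : Matrix.fromBlocks u 0 0 u' + Matrix.fromBlocks 0 z zᴴ 0
      = Matrix.fromBlocks u z zᴴ u' := by
    ext a b
    rcases a with a | a <;> rcases b with b | b <;> simp [Matrix.fromBlocks]
  have hBsa : (Matrix.fromBlocks 0 z zᴴ (0 : Matrix ι ι X))ᴴ
      = Matrix.fromBlocks 0 z zᴴ 0 := by
    ext a b
    rcases a with a | a <;> rcases b with b | b <;>
      simp [Matrix.fromBlocks, Matrix.conjTranspose_apply]
  have hNB : M.N (ι ⊕ ι) (Matrix.fromBlocks 0 z zᴴ 0)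
      ≤ M.N (ι ⊕ ι) (Matrix.fromBlocks u 0 0 u') :=
    M.reg1 _ _ _ hBsa hU (by rw [hUB1]; exact hQ) (by rw [hUB2]; exact h)
  have hmax := M.ruan2 ι ι u u'
  have hz : z = trip (sel Sum.inl) (Matrix.fromBlocks 0 z zᴴ 0) (sel Sum.inr)ᴴ := by
    ext i j
    rw [trip_apply]
    simp [sel, Matrix.conjTranspose_apply, apply_ite, ite_mul, mul_ite, ite_smul,
      Finset.sum_ite_eq, Finset.sum_ite_eq', Matrix.fromBlocks]
  have hr := M.ruan1 ι (ι ⊕ ι) (sel Sum.inl) (Matrix.fromBlocks 0 z zᴴ 0)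
    (sel Sum.inr)ᴴ
  have h1 : opN (sel (Sum.inl : ι → ι ⊕ ι)) ≤ 1 := opN_sel _ Sum.inl_injective
  have h2 : opN ((sel (Sum.inr : ι → ι ⊕ ι))ᴴ) ≤ 1 := by
    rw [opN_conjTranspose]; exact opN_sel _ Sum.inr_injective
  have hBnn := M.N_nonneg (ι ⊕ ι) (Matrix.fromBlocks 0 z zᴴ 0)
  have h1n := opN_nonneg (sel (Sum.inl : ι → ι ⊕ ι))
  have h2n := opN_nonneg ((sel (Sum.inr : ι → ι ⊕ ι))ᴴ)
  have : M.N ι z ≤ M.N (ι ⊕ ι) (Matrix.fromBlocks 0 z zᴴ 0) := by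
    conv_lhs => rw [hz]
    calc M.N ι (trip (sel Sum.inl) (Matrix.fromBlocks 0 z zᴴ 0) (sel Sum.inr)ᴴ)
        ≤ opN (sel Sum.inl) * M.N (ι ⊕ ι) (Matrix.fromBlocks 0 z zᴴ 0)
            * opN (sel Sum.inr)ᴴ := hr
      _ ≤ 1 * M.N (ι ⊕ ι) (Matrix.fromBlocks 0 z zᴴ 0) * 1 := by
          apply mul_le_mul (mul_le_mul h1 le_rfl hBnn zero_le_one) h2 h2n
          positivity
      _ = M.N (ι ⊕ ι) (Matrix.fromBlocks 0 z zᴴ 0) := by ring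
  rw [hmax] at hNB
  linarith

end aux2

section aux3

variable {X : Type} [AddCommGroup X] [Module ℂ X] [StarAddMonoid X]
  [StarModule ℂ X] (M : MROS X)

lemma corner (x : X) : ∃ P ∈ M.pos (Fin 2), P 0 1 = x := by
  classical
  set B : Matrix (Fin 2) (Fin 2) X := Matrix.of fun i j =>
    if i = 0 ∧ j = 1 then x else if i = 1 ∧ j = 0 then star x else 0 with hB
  have hBsa : Bᴴ = B := by
    ext i j
    fin_cases i <;> fin_cases j <;> simp [hB, Matrix.conjTranspose_apply]
  set c : ℝ := M.N (Fin 2) B + 1 with hc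
  have hc0 : 0 < c := by have := M.N_nonneg (Fin 2) B; simp only [hc]; linarith
  set B' : Matrix (Fin 2) (Fin 2) X := ((c⁻¹ : ℝ) : ℂ) • B with hB'
  have hB'sa : B'ᴴ = B' := by
    rw [hB', Matrix.conjTranspose_smul, hBsa]
    congr 1
    simp [RCLike.star_def, Complex.conj_ofReal]
  have hB'n : M.N (Fin 2) B' < 1 := by
    rw [hB', M.N_smul]
    rw [Complex.norm_real, Real.norm_eq_abs, abs_of_pos (by positivity)]
    calc c⁻¹ * M.N (Fin 2) B < c⁻¹ * c := by
          apply mul_lt_mul_of_pos_left _ (by positivity)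
          simp only [hc]; linarith
      _ = 1 := inv_mul_cancel₀ hc0.ne'
  obtain ⟨u, hu, -, hm, hp⟩ := M.reg2 (Fin 2) B' hB'sa hB'n
  set d : Fin 2 → ℂ := ![1, -1] with hd
  have hQ := M.pos_compress (Fin 2) (Fin 2) (Matrix.diagonal d) (u - B') hm
  have hP := M.pos_add _ _ _ hp hQ
  have hP2 := M.pos_smul _ (c/2) _ (by positivity) hP
  refine ⟨_, hP2, ?_⟩
  rw [Matrix.smul_apply]
  have h01 : (trip (Matrix.diagonal d) (u - B') (Matrix.diagonal d)ᴴ) 0 1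
      = (-1:ℂ) • (u - B') 0 1 := by
    rw [trip_diagonal]; simp [hd]
  rw [Matrix.add_apply, h01]
  have hBx : B 0 1 = x := by simp [hB]
  have step : (u + B') 0 1 + (-1:ℂ) • (u - B') 0 1 = ((2 * c⁻¹ : ℝ) : ℂ) • x := by
    simp only [Matrix.add_apply, Matrix.sub_apply, hB', Matrix.smul_apply, hBx]
    push_cast
    module
  rw [step, smul_smul, ← Complex.ofReal_mul]
  have : c / 2 * (2 * c⁻¹) = 1 := by field_simp
  rw [this]
  simp
end aux3

section aux4

variable {Y : Type} [AddCommGroup Y]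

/-- Matrix with a single (possibly) nonzero entry. -/
def sg {ι : Type} [DecidableEq ι] (i₀ j₀ : ι) (m : Y) : Matrix ι ι Y :=
  Matrix.of fun i j => if i = i₀ ∧ j = j₀ then m else 0

lemma matrix_eq_sum_sg {ι : Type} [Fintype ι] [DecidableEq ι] (z : Matrix ι ι Y) :
    z = ∑ p : ι × ι, sg p.1 p.2 (z p.1 p.2) := by
  ext a b
  rw [Matrix.sum_apply]
  simp [sg, Fintype.sum_prod_type, ite_and, Finset.sum_ite_eq]

lemma sg_sum {ι γ : Type} [DecidableEq ι] (i₀ j₀ : ι) (S : Finset γ) (f : γ → Y) :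
    sg i₀ j₀ (∑ m ∈ S, f m) = ∑ m ∈ S, sg i₀ j₀ (f m) := by
  ext a b
  rw [Matrix.sum_apply]
  simp only [sg, Matrix.of_apply]
  split
  · rfl
  · simp

lemma trip_sel_sel {X ι κ : Type} [AddCommGroup X] [Module ℂ X] [Fintype κ]
    [DecidableEq κ] (f : ι → κ) (v : Matrix κ κ X) :
    trip (sel f) v (sel f)ᴴ = Matrix.of fun p q => v (f p) (f q) := by
  ext p q
  rw [trip_apply]
  simp [sel, Matrix.conjTranspose_apply, apply_ite, ite_mul, mul_ite, ite_smul,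
    Finset.sum_ite_eq, Finset.sum_ite_eq']

lemma pos_fromBlocks {X : Type} [AddCommGroup X] [Module ℂ X] [StarAddMonoid X]
    [StarModule ℂ X] (M : MROS X) (κ₁ κ₂ : Type) [Fintype κ₁] [DecidableEq κ₁]
    [Fintype κ₂] [DecidableEq κ₂] (v₁ : Matrix κ₁ κ₁ X) (v₂ : Matrix κ₂ κ₂ X)
    (h₁ : v₁ ∈ M.pos κ₁) (h₂ : v₂ ∈ M.pos κ₂) :
    Matrix.fromBlocks v₁ 0 0 v₂ ∈ M.pos (κ₁ ⊕ κ₂) := by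
  have c₁ := M.pos_compress (κ₁ ⊕ κ₂) κ₁ ((sel (Sum.inl : κ₁ → κ₁ ⊕ κ₂))ᴴ) v₁ h₁
  have c₂ := M.pos_compress (κ₁ ⊕ κ₂) κ₂ ((sel (Sum.inr : κ₂ → κ₁ ⊕ κ₂))ᴴ) v₂ h₂
  have e₁ : trip ((sel (Sum.inl : κ₁ → κ₁ ⊕ κ₂))ᴴ) v₁ ((sel (Sum.inl : κ₁ → κ₁ ⊕ κ₂))ᴴ)ᴴ
      = Matrix.fromBlocks v₁ 0 0 0 := by
    ext a b
    rw [trip_apply]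
    rcases a with a | a <;> rcases b with b | b <;>
      simp [sel, Matrix.conjTranspose_apply, apply_ite, ite_mul, mul_ite, ite_smul,
        Finset.sum_ite_eq, Finset.sum_ite_eq', Matrix.fromBlocks]
  have e₂ : trip ((sel (Sum.inr : κ₂ → κ₁ ⊕ κ₂))ᴴ) v₂ ((sel (Sum.inr : κ₂ → κ₁ ⊕ κ₂))ᴴ)ᴴ
      = Matrix.fromBlocks 0 0 0 v₂ := by
    ext a b
    rw [trip_apply]
    rcases a with a | a <;> rcases b with b | b <;>
      simp [sel, Matrix.conjTranspose_apply, apply_ite, ite_mul, mul_ite, ite_smul,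
        Finset.sum_ite_eq, Finset.sum_ite_eq', Matrix.fromBlocks]
  rw [e₁] at c₁
  rw [e₂] at c₂
  have := M.pos_add _ _ _ c₁ c₂
  have he : Matrix.fromBlocks v₁ 0 0 (0 : Matrix κ₂ κ₂ X)
      + Matrix.fromBlocks 0 0 0 v₂ = Matrix.fromBlocks v₁ 0 0 v₂ := by
    ext a b
    rcases a with a | a <;> rcases b with b | b <;> simp [Matrix.fromBlocks]
  rwa [he] at this

end aux4

set_option linter.unusedSectionVars false

section aux5

variable {V W : Type} [AddCommGroup V] [Module ℂ V] [StarAddMonoid V]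
  [StarModule ℂ V] [AddCommGroup W] [Module ℂ W] [StarAddMonoid W]
  [StarModule ℂ W] [StarAddMonoid (V ⊗[ℂ] W)] [StarModule ℂ (V ⊗[ℂ] W)]

variable (MV : MROS V) (MW : MROS W)

lemma deltaPos_of_rep (ι : Type) [Fintype ι] [DecidableEq ι]
    (z : Matrix ι ι (V ⊗[ℂ] W)) (κ₁ κ₂ : Type) [Fintype κ₁] [DecidableEq κ₁]
    [Fintype κ₂] [DecidableEq κ₂] (v : Matrix κ₁ κ₁ V) (w : Matrix κ₂ κ₂ W)
    (α : Matrix ι (κ₁ × κ₂) ℂ) (hv : v ∈ MV.pos κ₁) (hw : w ∈ MW.pos κ₂)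
    (hz : z = trip α (kron v w) αᴴ) : z ∈ DeltaPos MV MW ι := by
  classical
  let e₁ := Fintype.equivFin κ₁
  let e₂ := Fintype.equivFin κ₂
  refine ⟨Fintype.card κ₁, Fintype.card κ₂,
    Matrix.of (fun p q => v (e₁.symm p) (e₁.symm q)),
    Matrix.of (fun p q => w (e₂.symm p) (e₂.symm q)),
    Matrix.of (fun a c => α a (e₁.symm c.1, e₂.symm c.2)), ?_, ?_, ?_⟩
  · rw [show (Matrix.of (fun p q => v (e₁.symm p) (e₁.symm q))) = trip (sel e₁.symm) v (sel e₁.symm)ᴴ from (trip_sel_sel _ _).symm]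
    exact MV.pos_compress _ _ _ _ hv
  · rw [show (Matrix.of (fun p q => w (e₂.symm p) (e₂.symm q))) = trip (sel e₂.symm) w (sel e₂.symm)ᴴ from (trip_sel_sel _ _).symm]
    exact MW.pos_compress _ _ _ _ hw
  · rw [hz]
    ext a b
    rw [trip_apply, trip_apply]
    refine Fintype.sum_equiv (e₁.prodCongr e₂) _ _ (fun p => ?_)
    refine Fintype.sum_equiv (e₁.prodCongr e₂) _ _ (fun q => ?_)
    simp [kron, Matrix.conjTranspose_apply, Equiv.prodCongr_apply, Prod.map,
      Equiv.symm_apply_apply]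

/-- Every matrix appears as the off-diagonal corner of an element of the
`Δ`-cone. -/
def GoodM (ι : Type) [Fintype ι] [DecidableEq ι]
    (z : Matrix ι ι (V ⊗[ℂ] W)) : Prop :=
  ∃ u u', Matrix.fromBlocks u z zᴴ u' ∈ DeltaPos MV MW (ι ⊕ ι)

lemma deltaPos_zero (ι : Type) [Fintype ι] [DecidableEq ι] :
    (0 : Matrix ι ι (V ⊗[ℂ] W)) ∈ DeltaPos MV MW ι := by
  refine ⟨0, 0, 0, 0, 0, MV.pos_zero _, MW.pos_zero _, ?_⟩
  ext i j
  rw [trip_apply]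
  simp

lemma good_zero (ι : Type) [Fintype ι] [DecidableEq ι] :
    GoodM MV MW ι (0 : Matrix ι ι (V ⊗[ℂ] W)) := by
  refine ⟨0, 0, ?_⟩
  have : Matrix.fromBlocks (0 : Matrix ι ι (V ⊗[ℂ] W)) 0 (0 : Matrix ι ι (V ⊗[ℂ] W))ᴴ 0
      = (0 : Matrix (ι ⊕ ι) (ι ⊕ ι) (V ⊗[ℂ] W)) := by
    ext a b
    rcases a with a | a <;> rcases b with b | b <;> simp [Matrix.fromBlocks]
  rw [this]
  exact deltaPos_zero MV MW _

lemma good_add (ι : Type) [Fintype ι] [DecidableEq ι]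
    (z₁ z₂ : Matrix ι ι (V ⊗[ℂ] W)) (h₁ : GoodM MV MW ι z₁)
    (h₂ : GoodM MV MW ι z₂) : GoodM MV MW ι (z₁ + z₂) := by
  classical
  obtain ⟨u₁, u₁', k₁, l₁, v₁, w₁, α₁, hv₁, hw₁, he₁⟩ := h₁
  obtain ⟨u₂, u₂', k₂, l₂, v₂, w₂, α₂, hv₂, hw₂, he₂⟩ := h₂
  set α : Matrix (ι ⊕ ι) ((Fin k₁ ⊕ Fin k₂) × (Fin l₁ ⊕ Fin l₂)) ℂ :=
    Matrix.of fun a c =>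
      Sum.elim (fun p => Sum.elim (fun q => α₁ a (p, q)) (fun _ => 0) c.2)
        (fun p => Sum.elim (fun _ => 0) (fun q => α₂ a (p, q)) c.2) c.1 with hα
  have key : trip α (kron (Matrix.fromBlocks v₁ 0 0 v₂)
      (Matrix.fromBlocks w₁ 0 0 w₂)) αᴴ
      = trip α₁ (kron v₁ w₁) α₁ᴴ + trip α₂ (kron v₂ w₂) α₂ᴴ := by
    ext a b
    rw [Matrix.add_apply, trip_apply, trip_apply, trip_apply]
    simp only [Fintype.sum_prod_type, Fintype.sum_sum_type, hα, Matrix.of_apply,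
      Sum.elim_inl, Sum.elim_inr, Matrix.conjTranspose_apply, kron,
      Matrix.fromBlocks_apply₁₁, Matrix.fromBlocks_apply₁₂,
      Matrix.fromBlocks_apply₂₁, Matrix.fromBlocks_apply₂₂,
      TensorProduct.zero_tmul, TensorProduct.tmul_zero, star_zero, mul_zero,
      zero_mul, zero_smul, smul_zero, Finset.sum_const_zero, add_zero, zero_add,
      Matrix.zero_apply]
  refine ⟨u₁ + u₂, u₁' + u₂', deltaPos_of_rep MV MW _ _ _ _
    (Matrix.fromBlocks v₁ 0 0 v₂) (Matrix.fromBlocks w₁ 0 0 w₂) α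
    (pos_fromBlocks MV _ _ _ _ hv₁ hv₂) (pos_fromBlocks MW _ _ _ _ hw₁ hw₂) ?_⟩
  rw [key, ← he₁, ← he₂]
  ext a b
  rcases a with a | a <;> rcases b with b | b <;>
    simp [Matrix.fromBlocks, Matrix.conjTranspose_apply, star_add]

end aux5

section aux6

variable {V W : Type} [AddCommGroup V] [Module ℂ V] [StarAddMonoid V]
  [StarModule ℂ V] [AddCommGroup W] [Module ℂ W] [StarAddMonoid W]
  [StarModule ℂ W] [StarAddMonoid (V ⊗[ℂ] W)] [StarModule ℂ (V ⊗[ℂ] W)]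

variable (MV : MROS V) (MW : MROS W)

set_option maxRecDepth 10000 in
lemma good_single (hst : ∀ (v : V) (w : W), star (v ⊗ₜ[ℂ] w) = star v ⊗ₜ[ℂ] star w)
    (ι : Type) [Fintype ι] [DecidableEq ι] (i₀ j₀ : ι) (x : V) (y : W) :
    GoodM MV MW ι (sg i₀ j₀ (x ⊗ₜ[ℂ] y)) := by
  classical
  obtain ⟨P, hP, hPx⟩ := corner MV x
  obtain ⟨Q, hQ, hQy⟩ := corner MW y
  have hP10 : P 1 0 = star x := by
    have h := MV.pos_sa _ P hP
    calc P 1 0 = Pᴴ 1 0 := by rw [h]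
      _ = star (P 0 1) := rfl
      _ = star x := by rw [hPx]
  have hQ10 : Q 1 0 = star y := by
    have h := MW.pos_sa _ Q hQ
    calc Q 1 0 = Qᴴ 1 0 := by rw [h]
      _ = star (Q 0 1) := rfl
      _ = star y := by rw [hQy]
  set α : Matrix (ι ⊕ ι) (Fin 2 × Fin 2) ℂ := Matrix.of fun a c =>
    if a = Sum.inl i₀ ∧ c = ((0 : Fin 2), (0 : Fin 2)) then 1
    else if a = Sum.inr j₀ ∧ c = (1, 1) then 1 else 0 with hα
  have key : trip α (kron P Q) αᴴ = Matrix.fromBlocks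
      (sg i₀ i₀ (P 0 0 ⊗ₜ[ℂ] Q 0 0)) (sg i₀ j₀ (x ⊗ₜ[ℂ] y))
      ((sg i₀ j₀ (x ⊗ₜ[ℂ] y))ᴴ) (sg j₀ j₀ (P 1 1 ⊗ₜ[ℂ] Q 1 1)) := by
    ext a b
    rw [trip_apply]
    rcases a with i | i <;> rcases b with j | j
    · by_cases hi : i = i₀ <;> by_cases hj : j = i₀ <;>
        simp [hα, sg, kron, Matrix.conjTranspose_apply, Fintype.sum_prod_type,
          Fin.sum_univ_two, Matrix.fromBlocks, hi, hj, hPx, hQy, hP10, hQ10, hst]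
    · by_cases hi : i = i₀ <;> by_cases hj : j = j₀ <;>
        simp [hα, sg, kron, Matrix.conjTranspose_apply, Fintype.sum_prod_type,
          Fin.sum_univ_two, Matrix.fromBlocks, hi, hj, hPx, hQy, hP10, hQ10, hst]
    · by_cases hi : i = j₀ <;> by_cases hj : j = i₀ <;>
        simp [hα, sg, kron, Matrix.conjTranspose_apply, Fintype.sum_prod_type,
          Fin.sum_univ_two, Matrix.fromBlocks, hi, hj, hPx, hQy, hP10, hQ10, hst]
    · by_cases hi : i = j₀ <;> by_cases hj : j = j₀ <;>
        simp [hα, sg, kron, Matrix.conjTranspose_apply, Fintype.sum_prod_type,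
          Fin.sum_univ_two, Matrix.fromBlocks, hi, hj, hPx, hQy, hP10, hQ10, hst]
  exact ⟨_, _, deltaPos_of_rep MV MW _ _ (Fin 2) (Fin 2) P Q α hP hQ key.symm⟩

lemma good_all (hst : ∀ (v : V) (w : W), star (v ⊗ₜ[ℂ] w) = star v ⊗ₜ[ℂ] star w)
    (ι : Type) [Fintype ι] [DecidableEq ι] (z : Matrix ι ι (V ⊗[ℂ] W)) :
    GoodM MV MW ι z := by
  classical
  rw [show z = ∑ p : ι × ι, sg p.1 p.2 (z p.1 p.2) from matrix_eq_sum_sg z]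
  apply Finset.sum_induction _ (GoodM MV MW ι)
    (fun a b ha hb => good_add MV MW ι a b ha hb) (good_zero MV MW ι)
  rintro ⟨i, j⟩ -
  obtain ⟨S, hS⟩ := TensorProduct.exists_finset (z i j)
  rw [hS, sg_sum]
  apply Finset.sum_induction _ (GoodM MV MW ι)
    (fun a b ha hb => good_add MV MW ι a b ha hb) (good_zero MV MW ι)
  rintro ⟨xv, yw⟩ -
  exact good_single MV MW hst ι i j xv yw

lemma trip_corner11 {X ι κ : Type} [AddCommGroup X] [Module ℂ X] [Fintype κ]
    (α : Matrix (ι ⊕ ι) κ ℂ) (K : Matrix κ κ X) :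
    (Matrix.of fun i j => trip α K αᴴ (Sum.inl i) (Sum.inl j))
      = trip (Matrix.of fun i c => α (Sum.inl i) c) K
          (Matrix.of fun i c => α (Sum.inl i) c)ᴴ := by
  ext i j
  rw [Matrix.of_apply, trip_apply, trip_apply]
  simp [Matrix.conjTranspose_apply]

lemma trip_corner22 {X ι κ : Type} [AddCommGroup X] [Module ℂ X] [Fintype κ]
    (α : Matrix (ι ⊕ ι) κ ℂ) (K : Matrix κ κ X) :
    (Matrix.of fun i j => trip α K αᴴ (Sum.inr i) (Sum.inr j))
      = trip (Matrix.of fun i c => α (Sum.inr i) c) K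
          (Matrix.of fun i c => α (Sum.inr i) c)ᴴ := by
  ext i j
  rw [Matrix.of_apply, trip_apply, trip_apply]
  simp [Matrix.conjTranspose_apply]

lemma corners_in_deltaPos (ι : Type) [Fintype ι] [DecidableEq ι]
    (u z z' u' : Matrix ι ι (V ⊗[ℂ] W))
    (h : Matrix.fromBlocks u z z' u' ∈ DeltaPos MV MW (ι ⊕ ι)) :
    u ∈ DeltaPos MV MW ι ∧ u' ∈ DeltaPos MV MW ι := by
  obtain ⟨k, l, v, w, α, hv, hw, he⟩ := h
  constructor
  · refine ⟨k, l, v, w, Matrix.of fun i c => α (Sum.inl i) c, hv, hw, ?_⟩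
    rw [← trip_corner11]
    ext i j
    rw [Matrix.of_apply, ← he]
    simp [Matrix.fromBlocks]
  · refine ⟨k, l, v, w, Matrix.of fun i c => α (Sum.inr i) c, hv, hw, ?_⟩
    rw [← trip_corner22]
    ext i j
    rw [Matrix.of_apply, ← he]
    simp [Matrix.fromBlocks]

variable (A : MROS (V ⊗[ℂ] W))

lemma deltaPos_sub_pos
    (hp : ∀ (k l : ℕ) (v : Matrix (Fin k) (Fin k) V)
      (w : Matrix (Fin l) (Fin l) W), v ∈ MV.pos (Fin k) →
      w ∈ MW.pos (Fin l) → kron v w ∈ A.pos (Fin k × Fin l))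
    (ι : Type) [Fintype ι] [DecidableEq ι] : DeltaPos MV MW ι ⊆ A.pos ι := by
  rintro z ⟨k, l, v, w, α, hv, hw, rfl⟩
  exact A.pos_compress _ _ α _ (hp k l v w hv hw)

lemma N_le_deltaAbs
    (hsub : ∀ (k l : ℕ) (v : Matrix (Fin k) (Fin k) V)
      (w : Matrix (Fin l) (Fin l) W),
      A.N (Fin k × Fin l) (kron v w) ≤ MV.N (Fin k) v * MW.N (Fin l) w)
    (ι : Type) [Fintype ι] [DecidableEq ι] (u : Matrix ι ι (V ⊗[ℂ] W))
    (hu : u ∈ DeltaPos MV MW ι) : A.N ι u ≤ DeltaAbs MV MW ι u := by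
  apply le_csInf
  · obtain ⟨k, l, v, w, β, hv, hw, he⟩ := hu
    exact ⟨_, k, l, v, w, β, hv, hw, he, rfl⟩
  · rintro r ⟨k, l, v, w, γ, hv, hw, he, rfl⟩
    have h1 := A.ruan1 ι (Fin k × Fin l) γ (kron v w) γᴴ
    have h2 := hsub k l v w
    have h4 := opN_nonneg γ
    rw [opN_conjTranspose] at h1
    rw [he]
    calc A.N ι (trip γ (kron v w) γᴴ)
        ≤ opN γ * A.N (Fin k × Fin l) (kron v w) * opN γ := h1
      _ ≤ opN γ * (MV.N (Fin k) v * MW.N (Fin l) w) * opN γ :=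
          mul_le_mul_of_nonneg_right (mul_le_mul_of_nonneg_left h2 h4) h4
      _ = opN γ ^ 2 * MV.N (Fin k) v * MW.N (Fin l) w := by ring

lemma AN_le_DeltaN
    (hst : ∀ (v : V) (w : W), star (v ⊗ₜ[ℂ] w) = star v ⊗ₜ[ℂ] star w)
    (hsub : ∀ (k l : ℕ) (v : Matrix (Fin k) (Fin k) V)
      (w : Matrix (Fin l) (Fin l) W),
      A.N (Fin k × Fin l) (kron v w) ≤ MV.N (Fin k) v * MW.N (Fin l) w)
    (hp : ∀ (k l : ℕ) (v : Matrix (Fin k) (Fin k) V)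
      (w : Matrix (Fin l) (Fin l) W), v ∈ MV.pos (Fin k) →
      w ∈ MW.pos (Fin l) → kron v w ∈ A.pos (Fin k × Fin l))
    (ι : Type) [Fintype ι] [DecidableEq ι] (z : Matrix ι ι (V ⊗[ℂ] W)) :
    A.N ι z ≤ DeltaN MV MW ι z := by
  apply le_csInf
  · obtain ⟨u, u', hg⟩ := good_all MV MW hst ι z
    exact ⟨_, u, u', hg, rfl⟩
  · rintro r ⟨u, u', hmem, rfl⟩
    have hA : Matrix.fromBlocks u z zᴴ u' ∈ A.pos (ι ⊕ ι) :=
      deltaPos_sub_pos MV MW A hp _ hmem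
    have hL := norm_offdiag_le A ι u z u' hA
    obtain ⟨hu, hu'⟩ := corners_in_deltaPos MV MW ι u z zᴴ u' hmem
    calc A.N ι z ≤ max (A.N ι u) (A.N ι u') := hL
      _ ≤ max (DeltaAbs MV MW ι u) (DeltaAbs MV MW ι u') :=
          max_le_max (N_le_deltaAbs MV MW A hsub ι u hu)
            (N_le_deltaAbs MV MW A hsub ι u' hu')

end aux6

/-- The Δ-tensor product is the largest matrix regular operator space structure
on `V ⊗ W` whose norm is subcross and for which elementary tensors of
positives are positive. -/
theorem stmt_10 {V W : Type} [AddCommGroup V] [Module ℂ V] [StarAddMonoid V]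
    [StarModule ℂ V] [AddCommGroup W] [Module ℂ W] [StarAddMonoid W]
    [StarModule ℂ W] [StarAddMonoid (V ⊗[ℂ] W)] [StarModule ℂ (V ⊗[ℂ] W)]
    (hst : ∀ (v : V) (w : W), star (v ⊗ₜ[ℂ] w) = star v ⊗ₜ[ℂ] star w)
    (MV : MROS V) (MW : MROS W)
    (A : MROS (V ⊗[ℂ] W))
    (hsub : ∀ (k l : ℕ) (v : Matrix (Fin k) (Fin k) V)
      (w : Matrix (Fin l) (Fin l) W),
      A.N (Fin k × Fin l) (kron v w) ≤ MV.N (Fin k) v * MW.N (Fin l) w)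
    (hp : ∀ (k l : ℕ) (v : Matrix (Fin k) (Fin k) V)
      (w : Matrix (Fin l) (Fin l) W), v ∈ MV.pos (Fin k) →
      w ∈ MW.pos (Fin l) → kron v w ∈ A.pos (Fin k × Fin l)) :
    (∀ (ι : Type) [Fintype ι] [DecidableEq ι],
      DeltaPosC MV MW ι ⊆ A.pos ι) ∧
    (∀ (ι : Type) [Fintype ι] [DecidableEq ι] (z : Matrix ι ι (V ⊗[ℂ] W)),
      A.N ι z ≤ DeltaN MV MW ι z) := by
  constructor
  · intro ι _ _ z hz
    apply A.pos_closed
    intro ε hε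
    obtain ⟨u, hu, hn⟩ := hz ε hε
    exact ⟨u, deltaPos_sub_pos MV MW A hp _ hu,
      lt_of_le_of_lt (AN_le_DeltaN MV MW A hst hsub hp _ (z - u)) hn⟩
  · intro ι _ _ z
    exact AN_le_DeltaN MV MW A hst hsub hp ι z
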